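/- arXiv:2402.02720 — 2 statements merged into one kernel-verified Lean document; each statement's English description precedes it below -/
import Mathlib

section
/- Let X ⊂ ℝ^d be a closed convex set of diameter at most D, let l_1,…,l_T be convex functions on X, let g_t ∈ ∂l_t(x_t), and let λ_1,…,λ_{T-1} ∈ (0,∞) be discount factors. Consider Online Gradient Descent with learning rate η_t = D·V_t^{-1/2} whenever V_t > 0 (and x_{t+1} = x_t when V_t = 0, in which case g_t = 0): x_{t+1} = Π_X(x_t − η_t g_t). Then for all T ∈ ℕ_+, all loss sequences l_{1:T}, and all comparators u ∈ X, the discounted regret satisfies Reg_T := Σ_{t=1}^T (∏_{i=t}^{T-1} λ_i)·[l_t(x_t) − l_t(u)] ≤ (3/2)·D·√V_T. -/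
open scoped BigOperators RealInnerProductSpace

open Finset

/-!
Write `w_t = λ_t ⋯ λ_{T-1}` and rescale the gradients to `h_t = w_t g_t`. Then
`w_t² V_t = ∑_{i ≤ t} ‖h_i‖² =: S_t` and `η_t g_t = D h_t / √S_t`, so the iterates are those of
undiscounted adaptive OGD run on `h`, while the discounted regret is at most its linear regret
`∑ ⟪h_t, x_t - u⟫`. The projection step gives
`⟪h_t, x_t - u⟫ ≤ √S_t (‖x_t - u‖² - ‖x_{t+1} - u‖²) / (2D) + D ‖h_t‖² / (2 √S_t)`.
Since `√S_t` is nondecreasing, summation by parts bounds the first part by `D √S_T / 2`, and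
`∑ ‖h_t‖² / √S_t ≤ 2 √S_T` bounds the second by `D √S_T`.
-/

theorem sum_mul_sub_succ_le {a b : ℕ → ℝ} {C : ℝ} (ha : ∀ t, a t ≤ C) (hb0 : 0 ≤ b 0)
    (hb : Monotone b) (T : ℕ) :
    ∑ t ∈ Icc 1 T, b t * (a t - a (t + 1)) ≤ b T * (C - a (T + 1)) := by
  induction T with
  | zero => simpa using mul_nonneg hb0 (sub_nonneg.2 (ha 1))
  | succ n ih =>
    rw [sum_Icc_succ_top (by omega)]
    nlinarith [mul_nonneg (sub_nonneg.2 (hb n.le_succ)) (sub_nonneg.2 (ha (n + 1)))]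

theorem sub_div_sqrt_le_two_mul_sqrt_sub {a b : ℝ} (ha : 0 ≤ a) (hab : a ≤ b) :
    (b - a) / √b ≤ 2 * (√b - √a) := by
  rcases (ha.trans hab).eq_or_lt with hb | hb
  · simp [← hb, le_antisymm (hb ▸ hab) ha]
  have hsqrt_b : 0 < √b := Real.sqrt_pos.mpr hb
  have hsqrt : √a ≤ √b := Real.sqrt_le_sqrt hab
  rw [div_le_iff₀ hsqrt_b]
  nlinarith [Real.sq_sqrt ha, Real.sq_sqrt hb.le, Real.sqrt_nonneg a]

theorem sum_div_sqrt_partial_sum_le {c : ℕ → ℝ} (hc : ∀ t, 0 ≤ c t) (T : ℕ) :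
    ∑ t ∈ Icc 1 T, c t / √(∑ i ∈ Icc 1 t, c i) ≤ 2 * √(∑ i ∈ Icc 1 T, c i) := by
  induction T with
  | zero => simp
  | succ n ih =>
    have hS : 0 ≤ ∑ i ∈ Icc 1 n, c i := sum_nonneg fun i _ => hc i
    have hlast := sub_div_sqrt_le_two_mul_sqrt_sub hS (le_add_of_nonneg_right (hc (n + 1)))
    simp only [sum_Icc_succ_top (show 1 ≤ n + 1 by omega)]
    rw [add_sub_cancel_left] at hlast
    linarith

section Geometry

variable {E : Type*} [NormedAddCommGroup E] [InnerProductSpace ℝ E] {K : Set E}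

theorem norm_sub_le_norm_sub_of_isMinOn (hK : Convex ℝ K) {y v u : E}
    (hmin : IsMinOn (fun w => ‖w - y‖) K v) (hv : v ∈ K) (hu : u ∈ K) :
    ‖v - u‖ ≤ ‖y - u‖ := by
  have : Nonempty K := ⟨⟨v, hv⟩⟩
  have hinf : ‖y - v‖ = ⨅ w : K, ‖y - w‖ :=
    le_antisymm (le_ciInf fun w => by simpa only [norm_sub_rev y] using isMinOn_iff.mp hmin w w.2)
      (ciInf_le (f := fun w : K => ‖y - w‖) ⟨0, by rintro _ ⟨w, rfl⟩; exact norm_nonneg _⟩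
        ⟨v, hv⟩)
  have hobtuse : ⟪y - v, u - v⟫ ≤ 0 := (norm_eq_iInf_iff_real_inner_le_zero hK hv).mp hinf u hu
  have hexp : ‖y - u‖ ^ 2 = ‖y - v‖ ^ 2 - 2 * ⟪y - v, u - v⟫ + ‖v - u‖ ^ 2 := by
    rw [show y - u = (y - v) - (u - v) by abel, norm_sub_sq_real, norm_sub_rev u v]
  rw [← pow_le_pow_iff_left₀ (norm_nonneg _) (norm_nonneg _) two_ne_zero]
  nlinarith [sq_nonneg ‖y - v‖]

theorem inner_le_of_projected_gradient_step (hK : Convex ℝ K) {x x' g u : E} {η : ℝ}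
    (hη : 0 < η) (hmin : IsMinOn (fun y => ‖y - (x - η • g)‖) K x') (hx' : x' ∈ K)
    (hu : u ∈ K) :
    ⟪g, x - u⟫ ≤ (‖x - u‖ ^ 2 - ‖x' - u‖ ^ 2) / (2 * η) + η / 2 * ‖g‖ ^ 2 := by
  have hproj : ‖x' - u‖ ≤ ‖x - η • g - u‖ := norm_sub_le_norm_sub_of_isMinOn hK hmin hx' hu
  have hexp : ‖x - η • g - u‖ ^ 2 = ‖x - u‖ ^ 2 - 2 * η * ⟪g, x - u⟫ + η ^ 2 * ‖g‖ ^ 2 := by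
    rw [show x - η • g - u = (x - u) - η • g by abel, norm_sub_sq_real, real_inner_smul_right,
      norm_smul, Real.norm_of_nonneg hη.le, real_inner_comm]
    ring
  rw [div_add' _ _ _ (by positivity), le_div_iff₀ (by positivity)]
  nlinarith [pow_le_pow_left₀ (norm_nonneg _) hproj 2]

/-- At `s = 0` the right-hand side is `0` (as `x / 0 = 0`), whence the hypothesis `hg`. -/
theorem inner_le_of_adaptive_step (hK : Convex ℝ K) {D s : ℝ} (hD : 0 < D) (hs : 0 ≤ s)
    {x x' g u : E} (hg : s = 0 → g = 0)
    (hmin : 0 < s → IsMinOn (fun y => ‖y - (x - (D / s) • g)‖) K x') (hx' : x' ∈ K)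
    (hu : u ∈ K) :
    ⟪g, x - u⟫ ≤ s * (‖x - u‖ ^ 2 - ‖x' - u‖ ^ 2) / (2 * D) + D / 2 * (‖g‖ ^ 2 / s) := by
  rcases hs.eq_or_lt with rfl | hs
  · simp [hg rfl]
  calc ⟪g, x - u⟫
      ≤ (‖x - u‖ ^ 2 - ‖x' - u‖ ^ 2) / (2 * (D / s)) + D / s / 2 * ‖g‖ ^ 2 :=
        inner_le_of_projected_gradient_step hK (div_pos hD hs) (hmin hs) hx' hu
    _ = s * (‖x - u‖ ^ 2 - ‖x' - u‖ ^ 2) / (2 * D) + D / 2 * (‖g‖ ^ 2 / s) := by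
        field_simp


theorem adaptive_ogd_regret_le (hK : Convex ℝ K) {D : ℝ} (hD : 0 < D)
    (hdiam : ∀ x ∈ K, ∀ y ∈ K, ‖x - y‖ ≤ D) {x g : ℕ → E} (hxK : ∀ t, x t ∈ K) {T : ℕ}
    (hstep : ∀ t ∈ Icc 1 T, 0 < ∑ i ∈ Icc 1 t, ‖g i‖ ^ 2 →
      IsMinOn (fun y => ‖y - (x t - (D / √(∑ i ∈ Icc 1 t, ‖g i‖ ^ 2)) • g t)‖) K (x (t + 1)))
    {u : E} (hu : u ∈ K) :
    ∑ t ∈ Icc 1 T, ⟪g t, x t - u⟫ ≤ 3 / 2 * D * √(∑ t ∈ Icc 1 T, ‖g t‖ ^ 2) := by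
  set S : ℕ → ℝ := fun t => ∑ i ∈ Icc 1 t, ‖g i‖ ^ 2
  set a : ℕ → ℝ := fun t => ‖x t - u‖ ^ 2
  have hS_mono : Monotone S := fun m n hmn =>
    sum_le_sum_of_subset_of_nonneg (Icc_subset_Icc le_rfl hmn) fun _ _ _ => sq_nonneg _
  have ha : ∀ t, a t ≤ D ^ 2 := fun t =>
    pow_le_pow_left₀ (norm_nonneg _) (hdiam _ (hxK t) u hu) 2
  have hround : ∀ t ∈ Icc 1 T,
      ⟪g t, x t - u⟫ ≤ √(S t) * (a t - a (t + 1)) / (2 * D) + D / 2 * (‖g t‖ ^ 2 / √(S t)) := by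
    intro t ht
    have hgS : ‖g t‖ ^ 2 ≤ S t :=
      single_le_sum (fun i _ => sq_nonneg ‖g i‖) (mem_Icc.mpr ⟨(mem_Icc.mp ht).1, le_rfl⟩)
    refine inner_le_of_adaptive_step hK hD (Real.sqrt_nonneg _) (fun h => ?_)
      (fun h => hstep t ht (Real.sqrt_pos.mp h)) (hxK _) hu
    simpa using le_antisymm (hgS.trans (Real.sqrt_eq_zero'.mp h)) (sq_nonneg _)
  have habel := sum_mul_sub_succ_le ha (Real.sqrt_nonneg (S 0))
    (fun m n h => Real.sqrt_le_sqrt (hS_mono h)) T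
  have hada := sum_div_sqrt_partial_sum_le (fun t => sq_nonneg ‖g t‖) T
  calc ∑ t ∈ Icc 1 T, ⟪g t, x t - u⟫
      ≤ ∑ t ∈ Icc 1 T, (√(S t) * (a t - a (t + 1)) / (2 * D) + D / 2 * (‖g t‖ ^ 2 / √(S t))) :=
        sum_le_sum hround
    _ = (∑ t ∈ Icc 1 T, √(S t) * (a t - a (t + 1))) / (2 * D)
          + D / 2 * ∑ t ∈ Icc 1 T, ‖g t‖ ^ 2 / √(S t) := by
        rw [sum_add_distrib, sum_div, mul_sum]
    _ ≤ √(S T) * (D ^ 2 - a (T + 1)) / (2 * D) + D / 2 * (2 * √(S T)) := by gcongr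
    _ ≤ √(S T) * D ^ 2 / (2 * D) + D / 2 * (2 * √(S T)) := by
        gcongr
        exact sub_le_self _ (sq_nonneg _)
    _ = 3 / 2 * D * √(S T) := by field_simp; ring

end Geometry

/-- `discount lam s t = lam s * ⋯ * lam (t - 1)`, the weight of round `s` at horizon `t`. -/
def discount {M : Type*} [CommMonoid M] (lam : ℕ → M) (s t : ℕ) : M := ∏ i ∈ Icc s (t - 1), lam i

section Discount
variable {M : Type*} [CommMonoid M] (lam : ℕ → M)

theorem discount_self {t : ℕ} (ht : 1 ≤ t) : discount lam t t = 1 := by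
  rw [discount, Icc_eq_empty (by omega), prod_empty]

theorem discount_mul_discount {r s t : ℕ} (hs : 1 ≤ s) (hrs : r ≤ s) (hst : s ≤ t) :
    discount lam r s * discount lam s t = discount lam r t := by
  have hIcc : ∀ n, 1 ≤ n → ∀ m, Icc m (n - 1) = Ico m n := fun n hn m =>
    Icc_sub_one_right_eq_Ico_of_not_isMin (by simpa using (by omega : n ≠ 0)) m
  rw [discount, discount, discount, hIcc s hs, hIcc t (hs.trans hst), hIcc t (hs.trans hst)]
  exact prod_Ico_consecutive lam hrs hst

theorem discount_pow (n s t : ℕ) : discount (fun i => lam i ^ n) s t = discount lam s t ^ n :=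
  prod_pow _ _ _

end Discount

theorem sum_norm_discount_smul_sq {E : Type*} [SeminormedAddCommGroup E] [NormedSpace ℝ E]
    (lam : ℕ → ℝ) (g : ℕ → E) {t T : ℕ} (htT : t ≤ T) :
    ∑ i ∈ Icc 1 t, ‖discount lam i T • g i‖ ^ 2
      = discount lam t T ^ 2 * ∑ i ∈ Icc 1 t, discount (fun j => lam j ^ 2) i t * ‖g i‖ ^ 2 := by
  rw [mul_sum]
  refine sum_congr rfl fun i hi => ?_
  obtain ⟨hi1, hit⟩ := mem_Icc.mp hi
  rw [norm_smul, mul_pow, Real.norm_eq_abs, sq_abs, discount_pow,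
    ← discount_mul_discount lam (hi1.trans hit) hit htT]
  ring

theorem adagrad_discounted_regret_general
    (d T : ℕ) (hT : 1 ≤ T)
    (X : Set (EuclideanSpace ℝ (Fin d))) (hXconvex : Convex ℝ X)
    (D : ℝ) (hD : 0 < D)
    (hdiam : ∀ x ∈ X, ∀ y ∈ X, ‖x - y‖ ≤ D)
    (lam : ℕ → ℝ) (hlam : ∀ i, 0 < lam i)
    (l : ℕ → EuclideanSpace ℝ (Fin d) → ℝ)
    (x g : ℕ → EuclideanSpace ℝ (Fin d))
    (hxX : ∀ t, x t ∈ X)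
    (hsub : ∀ t, ∀ y ∈ X, l t (x t) + ⟪g t, y - x t⟫ ≤ l t y)
    (V : ℕ → ℝ)
    (hV : ∀ t, V t = ∑ i ∈ Finset.Icc 1 t, (∏ j ∈ Finset.Icc i (t-1), (lam j)^2) * ‖g i‖^2)
    (hOGD : ∀ t, 1 ≤ t →
      (V t = 0 → x (t+1) = x t) ∧
      (0 < V t → x (t+1) ∈ X ∧
        ∀ y ∈ X, ‖x (t+1) - (x t - (D * (Real.sqrt (V t))⁻¹) • g t)‖
          ≤ ‖y - (x t - (D * (Real.sqrt (V t))⁻¹) • g t)‖))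
    (u : EuclideanSpace ℝ (Fin d)) (hu : u ∈ X) :
    ∑ t ∈ Finset.Icc 1 T, (∏ i ∈ Finset.Icc t (T-1), lam i) * (l t (x t) - l t u)
      ≤ (3/2) * D * Real.sqrt (V T) := by
  set w : ℕ → ℝ := fun t => discount lam t T
  have hw : ∀ t, 0 < w t := fun t => prod_pos fun i _ => hlam i
  have hrescaled : ∀ t ≤ T, √(∑ i ∈ Icc 1 t, ‖w i • g i‖ ^ 2) = w t * √(V t) := fun t ht => by
    rw [sum_norm_discount_smul_sq lam g ht, Real.sqrt_mul (sq_nonneg _), Real.sqrt_sq (hw t).le,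
      hV t]
    rfl
  calc ∑ t ∈ Icc 1 T, w t * (l t (x t) - l t u)
      ≤ ∑ t ∈ Icc 1 T, ⟪w t • g t, x t - u⟫ := sum_le_sum fun t _ => by
        have hlin := hsub t u hu
        rw [← neg_sub, inner_neg_right] at hlin
        rw [real_inner_smul_left]
        exact mul_le_mul_of_nonneg_left (by linarith) (hw t).le
    _ ≤ 3 / 2 * D * √(∑ t ∈ Icc 1 T, ‖w t • g t‖ ^ 2) := by
        refine adaptive_ogd_regret_le hXconvex hD hdiam hxX (fun t ht hpos => ?_) hu
        obtain ⟨h1, htT⟩ := mem_Icc.mp ht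
        have hVpos : 0 < V t := by
          have h := Real.sqrt_pos.mpr hpos
          rw [hrescaled t htT] at h
          exact Real.sqrt_pos.mp (pos_of_mul_pos_right h (hw t).le)
        have hrate : (D / (w t * √(V t))) • (w t • g t) = (D * (√(V t))⁻¹) • g t := by
          rw [smul_smul]
          field_simp [(hw t).ne']
        rw [hrescaled t htT, hrate]
        exact isMinOn_iff.mpr ((hOGD t h1).2 hVpos).2
    _ = 3 / 2 * D * √(V T) := by rw [hrescaled T le_rfl, show w T = 1 from discount_self lam hT, one_mul]

/-- Gradient-adaptive OGD with learning rate `η_t = D·V_t^{-1/2}` achieves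
discounted regret at most `(3/2)·D·√V_T`. -/
theorem adagrad_discounted_regret
    (d T : ℕ) (hT : 1 ≤ T)
    (X : Set (EuclideanSpace ℝ (Fin d))) (hXclosed : IsClosed X) (hXconvex : Convex ℝ X)
    (D : ℝ) (hD : 0 < D)
    (hdiam : ∀ x ∈ X, ∀ y ∈ X, ‖x - y‖ ≤ D)
    (lam : ℕ → ℝ) (hlam : ∀ i, 0 < lam i)
    (l : ℕ → EuclideanSpace ℝ (Fin d) → ℝ)
    (hconv : ∀ t, ConvexOn ℝ X (l t))
    (x g : ℕ → EuclideanSpace ℝ (Fin d))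
    (hxX : ∀ t, x t ∈ X)
    (hsub : ∀ t, ∀ y ∈ X, l t (x t) + ⟪g t, y - x t⟫ ≤ l t y)
    (V : ℕ → ℝ)
    (hV : ∀ t, V t = ∑ i ∈ Finset.Icc 1 t, (∏ j ∈ Finset.Icc i (t-1), (lam j)^2) * ‖g i‖^2)
    (hOGD : ∀ t, 1 ≤ t →
      (V t = 0 → x (t+1) = x t) ∧
      (0 < V t → x (t+1) ∈ X ∧
        ∀ y ∈ X, ‖x (t+1) - (x t - (D * (Real.sqrt (V t))⁻¹) • g t)‖
          ≤ ‖y - (x t - (D * (Real.sqrt (V t))⁻¹) • g t)‖))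
    (u : EuclideanSpace ℝ (Fin d)) (hu : u ∈ X) :
    ∑ t ∈ Finset.Icc 1 T, (∏ i ∈ Finset.Icc t (T-1), lam i) * (l t (x t) - l t u)
      ≤ (3/2) * D * Real.sqrt (V T) :=
  adagrad_discounted_regret_general d T hT X hXconvex D hD hdiam lam hlam l x g hxX hsub V hV hOGD u
    hu
end

section
/- Run the discounted OCP algorithm A_CP with hyperparameter ε > 0 and discount factors λ_t ∈ (0,∞) (λ_0 := 1): initialize S*_{0,clip} = 0, V*_{0,clip} = 0, G*_0 = 0; predict r_t = max(r̃_t, 0) where r̃_t = 0 if G*_{t-1} = 0 and otherwise r̃_t is given by the erfi-based formula r̃_t = ε·erfi( S*_{t-1,clip} / (2√(V*_{t-1,clip} + 2G*_{t-1}S*_{t-1,clip} + 16(G*_{t-1})²)) ) − ε·G*_{t-1}/√(V*_{t-1,clip} + 2G*_{t-1}S*_{t-1,clip} + 16(G*_{t-1})²) · exp( (S*_{t-1,clip})² / (4(V*_{t-1,clip} + 2G*_{t-1}S*_{t-1,clip} + 16(G*_{t-1})²)) ); receive g*_t ∈ ∂f*_t(r_t), where f*_t is convex on [0,∞), minimized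 at r*_t ∈ [0,∞), with g*_t ≤ 0 whenever r_t = r*_t; set g*_{t,clip} = the projection of g*_t onto [−λ_{t-1}G*_{t-1}, λ_{t-1}G*_{t-1}], S*_{t,clip} = λ_{t-1}·S*_{t-1,clip} − g*_{t,clip}, V*_{t,clip} = λ_{t-1}²·V*_{t-1,clip} + (g*_{t,clip})², G*_t = max(λ_{t-1}·G*_{t-1}, |g*_t|). Define the discounted coverage metric S*_t := −Σ_{i=1}^t (∏_{j=i}^{t-1} λ_j)·g*_i. Then for all t ∈ ℕ_+: |S*_t| ≤ 2·√(V*_{t,clip})·(1 + √(log(1 + 2r_{t+1}·ε^{-1}))) + 14·G*_t·(1 + √(log(1 + 2r_{t+1}·ε^{-1})))². -/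
/-!
The clipped statistic `S*_clip` never becomes negative: a positive clipped gradient is a positive
gradient, which by the subgradient conditions forces a positive radius, and the erfi formula is
positive only when `S*_clip > 2 G*`. Clipping moves each discounted gradient by at most the
increment of `G*`, so `|S*_t - S*_{t,clip}| ≤ G*_t`. Finally, writing
`u = S / (2√(V + 2GS + 16G²))`, the lower bound `erfi u ≥ (exp u² - 1) / (2u)` turns
`r̃_{t+1} ≤ r_{t+1}` into `u ≤ 1 + √log(1 + 2 r_{t+1} / ε)`; squaring gives a quadratic inequality
in `S*_{t,clip}` whose solution is the bound with `13 G*_t`, the remaining `G*_t` paying for the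
clipping.
-/

open scoped BigOperators

/-- The (rescaled) imaginary error function `erfi(x) = ∫₀ˣ exp(u²) du`. -/
noncomputable def erfi (x : ℝ) : ℝ := ∫ u in (0:ℝ)..x, Real.exp (u^2)

open Real

lemma erfi_nonpos {x : ℝ} (hx : x ≤ 0) : erfi x ≤ 0 := by
  rw [erfi, intervalIntegral.integral_symm, neg_nonpos]
  exact intervalIntegral.integral_nonneg hx fun u _ => (exp_pos _).le

lemma erfi_le_mul_exp_sq {x : ℝ} (hx : 0 ≤ x) : erfi x ≤ x * exp (x ^ 2) := by
  calc erfi x ≤ ∫ _ in (0:ℝ)..x, exp (x ^ 2) :=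
        intervalIntegral.integral_mono_on hx (Continuous.intervalIntegrable (by fun_prop) _ _)
          intervalIntegrable_const fun u hu => exp_le_exp.2 (by nlinarith [hu.1, hu.2])
    _ = x * exp (x ^ 2) := by simp

lemma exp_sq_sub_one_div_le_erfi {x : ℝ} (hx : 0 < x) :
    (exp (x ^ 2) - 1) / (2 * x) ≤ erfi x := by
  have hderiv : ∀ u ∈ Set.uIcc 0 x,
      HasDerivAt (fun v => exp (v ^ 2) / (2 * x)) (u / x * exp (u ^ 2)) u := fun u _ => by
    refine (((hasDerivAt_pow 2 u).exp).div_const (2 * x)).congr_deriv ?_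
    field_simp
    ring
  calc (exp (x ^ 2) - 1) / (2 * x) = ∫ u in (0:ℝ)..x, u / x * exp (u ^ 2) := by
        rw [intervalIntegral.integral_eq_sub_of_hasDerivAt hderiv
          (Continuous.intervalIntegrable (by fun_prop) _ _)]
        simp [sub_div]
    _ ≤ erfi x :=
        intervalIntegral.integral_mono_on hx.le (Continuous.intervalIntegrable (by fun_prop) _ _)
          (Continuous.intervalIntegrable (by fun_prop) _ _) fun u hu =>
            mul_le_of_le_one_left (exp_pos _).le ((div_le_one hx).2 hu.2)

lemma lt_of_erfi_sub_mul_exp_sq_pos {u c : ℝ} (hc : 0 ≤ c) (h : 0 < erfi u - c * exp (u ^ 2)) :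
    c < u := by
  have hexp := exp_pos (u ^ 2)
  rcases le_or_gt u 0 with hu | hu
  · nlinarith [erfi_nonpos hu]
  · by_contra! hcu
    nlinarith [erfi_le_mul_exp_sq hu.le]

lemma le_one_add_sqrt_log_of_erfi_sub_mul_exp_sq_le {u c ρ : ℝ} (hc : 4 * u * c ≤ 1)
    (h : erfi u - c * exp (u ^ 2) ≤ ρ) : u ≤ 1 + √(log (1 + 2 * ρ)) := by
  rcases le_or_gt u 1 with hu | hu
  · linarith [sqrt_nonneg (log (1 + 2 * ρ))]
  have hu0 : 0 < u := by linarith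
  -- `erfi u ≥ (exp u² - 1)/(2u)` and `c ≤ 1/(4u)` leave `exp u² / (2u) ≤ 1 + 2ρ`.
  have hexp : exp (u ^ 2) / (2 * u) ≤ 1 + 2 * ρ := by
    have herfi := exp_sq_sub_one_div_le_erfi hu0
    have hc' : c * exp (u ^ 2) ≤ exp (u ^ 2) / (4 * u) := by
      rw [le_div_iff₀ (by positivity)]; nlinarith [exp_pos (u ^ 2)]
    have hinv : 1 / u ≤ 1 := (div_le_one hu0).2 hu.le
    have hsplit : exp (u ^ 2) / (2 * u)
        = 2 * ((exp (u ^ 2) - 1) / (2 * u) - exp (u ^ 2) / (4 * u)) + 1 / u := by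
      field_simp; ring
    linarith
  have hlog : u ^ 2 - log (2 * u) ≤ log (1 + 2 * ρ) := by
    have := log_le_log (by positivity) hexp
    rwa [log_div (exp_pos _).ne' (by positivity), log_exp] at this
  have hsq : (u - 1) ^ 2 ≤ log (1 + 2 * ρ) := by
    nlinarith [log_le_sub_one_of_pos (by positivity : 0 < 2 * u)]
  have := sqrt_le_sqrt hsq
  rw [sqrt_sq (by linarith)] at this
  linarith

lemma le_of_sq_le_four_mul_sq_mul {S V G w : ℝ} (hV : 0 ≤ V) (hG : 0 ≤ G) (hw : 1 ≤ w)
    (h : S ^ 2 ≤ 4 * w ^ 2 * (V + 2 * G * S + 16 * G ^ 2)) :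
    S ≤ 2 * √V * w + 13 * G * w ^ 2 := by
  have hsV := sq_sqrt hV
  have hw2 : w ^ 2 ≤ w ^ 4 := pow_le_pow_right₀ hw (by norm_num)
  -- Complete the square: `(S - 4w²G)² ≤ 4w²V + 80w⁴G² ≤ (2w√V + 9w²G)²`.
  have hsq : (S - 4 * w ^ 2 * G) ^ 2 ≤ (2 * √V * w + 9 * G * w ^ 2) ^ 2 := by
    nlinarith [mul_le_mul_of_nonneg_right hw2 (sq_nonneg G),
      mul_nonneg (mul_nonneg (sqrt_nonneg V) hG) (pow_nonneg (by linarith : (0:ℝ) ≤ w) 3)]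
  have := (abs_le_of_sq_le_sq' hsq (by positivity)).2
  linarith

/-- The unclipped prediction `r̃` of `A_CP`, as a function of `ε` and the clipped statistics
`V = V*_clip`, `G = G*`, `S = S*_clip` of the previous round. -/
noncomputable def ocpPrediction (eps V G S : ℝ) : ℝ :=
  eps * erfi (S / (2 * √(V + 2 * G * S + 16 * G ^ 2)))
    - eps * G / √(V + 2 * G * S + 16 * G ^ 2) * exp (S ^ 2 / (4 * (V + 2 * G * S + 16 * G ^ 2)))

lemma ocpPrediction_eq {eps V G S : ℝ} (hD : 0 ≤ V + 2 * G * S + 16 * G ^ 2) :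
    ocpPrediction eps V G S = eps * (erfi (S / (2 * √(V + 2 * G * S + 16 * G ^ 2)))
      - G / √(V + 2 * G * S + 16 * G ^ 2)
        * exp ((S / (2 * √(V + 2 * G * S + 16 * G ^ 2))) ^ 2)) := by
  have hexp : (S / (2 * √(V + 2 * G * S + 16 * G ^ 2))) ^ 2
      = S ^ 2 / (4 * (V + 2 * G * S + 16 * G ^ 2)) := by
    rw [div_pow, mul_pow, sq_sqrt hD]
    norm_num
  rw [ocpPrediction, hexp]
  ring

lemma two_mul_lt_of_ocpPrediction_pos {eps V G S : ℝ} (heps : 0 < eps) (hV : 0 ≤ V) (hG : 0 < G)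
    (hS : 0 ≤ S) (h : 0 < ocpPrediction eps V G S) : 2 * G < S := by
  have hD : 0 < V + 2 * G * S + 16 * G ^ 2 := by positivity
  rw [ocpPrediction_eq hD.le] at h
  have := lt_of_erfi_sub_mul_exp_sq_pos (by positivity) (pos_of_mul_pos_right h heps.le)
  rw [div_lt_div_iff₀ (sqrt_pos.2 hD) (by positivity)] at this
  nlinarith [sqrt_pos.2 hD]

lemma le_of_ocpPrediction_le {eps V G S r : ℝ} (heps : 0 < eps) (hV : 0 ≤ V) (hG : 0 < G)
    (hS : 0 ≤ S) (h : ocpPrediction eps V G S ≤ r) :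
    S ≤ 2 * √V * (1 + √(log (1 + 2 * r * eps⁻¹)))
      + 13 * G * (1 + √(log (1 + 2 * r * eps⁻¹))) ^ 2 := by
  set D := V + 2 * G * S + 16 * G ^ 2
  have hD : 0 < D := by positivity
  have hsD : 0 < √D := sqrt_pos.2 hD
  set u := S / (2 * √D) with hu
  rw [ocpPrediction_eq hD.le, ← le_div_iff₀' heps] at h
  have hc : 4 * u * (G / √D) ≤ 1 := by
    rw [hu, show 4 * (S / (2 * √D)) * (G / √D) = 2 * G * S / √D ^ 2 by field_simp; ring,
      sq_sqrt hD.le, div_le_one hD]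
    nlinarith
  have huw := le_one_add_sqrt_log_of_erfi_sub_mul_exp_sq_le hc h
  rw [← mul_div_assoc, div_eq_mul_inv] at huw
  have hSu : S = 2 * u * √D := by rw [hu]; field_simp
  refine le_of_sq_le_four_mul_sq_mul hV hG.le
    (by linarith [sqrt_nonneg (log (1 + 2 * r * eps⁻¹))]) ?_
  calc S ^ 2 = 4 * u ^ 2 * D := by rw [hSu, mul_pow, mul_pow, sq_sqrt hD.le]; ring
    _ ≤ _ := by gcongr

lemma pos_of_subgradient_pos {f : ℝ → ℝ} {r rstar g : ℝ} (hr : 0 ≤ r) (hrstar : 0 ≤ rstar)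
    (hmin : ∀ y ∈ Set.Ici (0:ℝ), f rstar ≤ f y)
    (hsub : ∀ y ∈ Set.Ici (0:ℝ), f r + g * (y - r) ≤ f y)
    (hneg : r = rstar → g ≤ 0) (hg : 0 < g) : 0 < r := by
  -- At `r = 0 < r*` the subgradient inequality towards `r*` would give `f r* > f 0 ≥ f r*`.
  by_contra! hr0
  obtain rfl : r = 0 := le_antisymm hr0 hr
  have hrstar_pos : 0 < rstar := hrstar.lt_of_ne fun h => (hneg h).not_gt hg
  nlinarith [hsub rstar hrstar, hmin 0 Set.self_mem_Ici, mul_pos hg hrstar_pos]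

lemma abs_max_neg_min_sub_le {b g : ℝ} (hb : 0 ≤ b) :
    |max (-b) (min g b) - g| ≤ max b |g| - b := by
  rcases abs_cases g with ⟨h1, h2⟩ | ⟨h1, h2⟩ <;> rcases le_total g b with h3 | h3 <;>
    rcases le_total (-b) g with h4 | h4 <;> simp_all [abs_le] <;> grind

noncomputable def discountedSum (lam c : ℕ → ℝ) (t : ℕ) : ℝ :=
  ∑ i ∈ Finset.Icc 1 t, (∏ j ∈ Finset.Icc i (t - 1), lam j) * c i

lemma discountedSum_succ (lam c : ℕ → ℝ) (n : ℕ) :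
    discountedSum lam c (n + 1) = lam n * discountedSum lam c n + c (n + 1) := by
  rw [discountedSum, Finset.sum_Icc_succ_top (by omega), Nat.add_sub_cancel,
    Finset.Icc_eq_empty_of_lt n.lt_add_one, Finset.prod_empty, one_mul, discountedSum,
    Finset.mul_sum]
  congr 1
  refine Finset.sum_congr rfl fun i hi => ?_
  obtain ⟨m, rfl⟩ : ∃ m, n = m + 1 := ⟨n - 1, by grind⟩
  rw [Nat.add_sub_cancel, Finset.prod_Icc_succ_top (by grind)]
  ring

section ClippedSum

variable {lam G g gclip S : ℕ → ℝ}

lemma abs_sub_clippedSum_le {Sstar : ℕ → ℝ} (hlam : ∀ n, 0 ≤ lam n) (hGnn : ∀ n, 0 ≤ G n)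
    (hG0 : G 0 = 0) (hG : ∀ n, G (n + 1) = max (lam n * G n) |g (n + 1)|)
    (hclip : ∀ n, gclip (n + 1) = max (-(lam n * G n)) (min (g (n + 1)) (lam n * G n)))
    (hS0 : S 0 = 0) (hS : ∀ n, S (n + 1) = lam n * S n - gclip (n + 1))
    (hSstar0 : Sstar 0 = 0) (hSstar : ∀ n, Sstar (n + 1) = lam n * Sstar n - g (n + 1))
    (n : ℕ) : |Sstar n - S n| ≤ G n := by
  induction n with
  | zero => simp [hS0, hSstar0, hG0]
  | succ n ih =>
    have hclip_err := abs_max_neg_min_sub_le (g := g (n + 1)) (mul_nonneg (hlam n) (hGnn n))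
    rw [← hclip, ← hG] at hclip_err
    calc |Sstar (n + 1) - S (n + 1)| = |lam n * (Sstar n - S n) + (gclip (n + 1) - g (n + 1))| := by
          rw [hS, hSstar]; ring_nf
      _ ≤ lam n * G n + (G (n + 1) - lam n * G n) := by
          grw [abs_add_le, abs_mul, abs_of_nonneg (hlam n)]
          exact add_le_add (mul_le_mul_of_nonneg_left ih (hlam n)) hclip_err
      _ = G (n + 1) := by ring

lemma clippedSum_eq_zero_of_eq_zero (hlam : ∀ n, 0 < lam n) (hGnn : ∀ n, 0 ≤ G n)
    (hG : ∀ n, lam n * G n ≤ G (n + 1))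
    (hclip : ∀ n, gclip (n + 1) = max (-(lam n * G n)) (min (g (n + 1)) (lam n * G n)))
    (hS0 : S 0 = 0) (hS : ∀ n, S (n + 1) = lam n * S n - gclip (n + 1))
    (n : ℕ) (hGn : G n = 0) : S n = 0 := by
  induction n with
  | zero => exact hS0
  | succ n ih =>
    have hGn' : G n = 0 := by nlinarith [hG n, hlam n, hGnn n]
    simp [hS, hclip, hGn', ih hGn']

lemma clippedSum_nonneg {eps : ℝ} {V : ℕ → ℝ} (heps : 0 < eps) (hlam : ∀ n, 0 < lam n)
    (hV : ∀ n, 0 ≤ V n) (hGnn : ∀ n, 0 ≤ G n)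
    (hclip : ∀ n, gclip (n + 1) = max (-(lam n * G n)) (min (g (n + 1)) (lam n * G n)))
    (hS0 : S 0 = 0) (hS : ∀ n, S (n + 1) = lam n * S n - gclip (n + 1))
    (hpred : ∀ n, 0 < g (n + 1) → G n ≠ 0 → 0 < ocpPrediction eps (V n) (G n) (S n))
    (n : ℕ) : 0 ≤ S n := by
  induction n with
  | zero => exact hS0.ge
  | succ n ih =>
    rw [hS]
    have hlamS := mul_nonneg (hlam n).le ih
    rcases le_or_gt (gclip (n + 1)) 0 with hc | hc
    · linarith
    -- A positive clipped gradient forces `2 G < S`, which keeps `λ S - gclip ≥ λ (S - G)` positive.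
    rw [hclip] at hc ⊢
    have hb : 0 ≤ lam n * G n := mul_nonneg (hlam n).le (hGnn n)
    have hcb := max_le (neg_le_self hb) (min_le_right (g (n + 1)) (lam n * G n))
    have hg : 0 < g (n + 1) := by
      by_contra! hg
      exact hc.not_ge (max_le (neg_nonpos.2 hb) ((min_le_left _ _).trans hg))
    have hGpos : 0 < G n := pos_of_mul_pos_right (hc.trans_le hcb) (hlam n).le
    have hSG := two_mul_lt_of_ocpPrediction_pos heps (hV n) hGpos ih (hpred n hg hGpos.ne')
    nlinarith [mul_lt_mul_of_pos_left hSG (hlam n)]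

end ClippedSum

theorem ocp_coverage_bound_prediction_general
    (eps : ℝ) (heps : 0 < eps)
    (lam : ℕ → ℝ) (hlam : ∀ t, 0 < lam t)
    (f : ℕ → ℝ → ℝ) (rstar : ℕ → ℝ)
    (Sc Vc Gs rt r gs gclip : ℕ → ℝ)
    (hSc0 : Sc 0 = 0) (hVc0 : Vc 0 = 0) (hGs0 : Gs 0 = 0)
    (hrt : ∀ t, 1 ≤ t →
      (Gs (t-1) = 0 → rt t = 0) ∧
      (Gs (t-1) ≠ 0 → rt t =
        eps * erfi (Sc (t-1) /
          (2 * Real.sqrt (Vc (t-1) + 2 * Gs (t-1) * Sc (t-1) + 16 * (Gs (t-1))^2)))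
        - eps * Gs (t-1) / Real.sqrt (Vc (t-1) + 2 * Gs (t-1) * Sc (t-1) + 16 * (Gs (t-1))^2)
          * Real.exp ((Sc (t-1))^2 /
            (4 * (Vc (t-1) + 2 * Gs (t-1) * Sc (t-1) + 16 * (Gs (t-1))^2)))))
    (hr : ∀ t, 1 ≤ t → r t = max (rt t) 0)
    (hrstar : ∀ t, 0 ≤ rstar t)
    (hmin : ∀ t, ∀ y ∈ Set.Ici (0:ℝ), f t (rstar t) ≤ f t y)
    (hsub : ∀ t, 1 ≤ t → ∀ y ∈ Set.Ici (0:ℝ), f t (r t) + gs t * (y - r t) ≤ f t y)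
    (hneg : ∀ t, 1 ≤ t → r t = rstar t → gs t ≤ 0)
    (hclip : ∀ t, 1 ≤ t →
      gclip t = max (-(lam (t-1) * Gs (t-1))) (min (gs t) (lam (t-1) * Gs (t-1))))
    (hScrec : ∀ t, 1 ≤ t → Sc t = lam (t-1) * Sc (t-1) - gclip t)
    (hVcrec : ∀ t, 1 ≤ t → Vc t = (lam (t-1))^2 * Vc (t-1) + (gclip t)^2)
    (hGsrec : ∀ t, 1 ≤ t → Gs t = max (lam (t-1) * Gs (t-1)) |gs t|)
    (Sstar : ℕ → ℝ)
    (hSstar : ∀ t, Sstar t = -∑ i ∈ Finset.Icc 1 t, (∏ j ∈ Finset.Icc i (t-1), lam j) * gs i) :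
    ∀ t, 1 ≤ t →
      |Sstar t| ≤ 2 * Real.sqrt (Vc t)
          * (1 + Real.sqrt (Real.log (1 + 2 * r (t+1) * eps⁻¹)))
        + 14 * Gs t * (1 + Real.sqrt (Real.log (1 + 2 * r (t+1) * eps⁻¹)))^2 := by
  have hGs (n : ℕ) : Gs (n + 1) = max (lam n * Gs n) |gs (n + 1)| := hGsrec (n + 1) n.succ_pos
  have hclip' (n : ℕ) : gclip (n + 1) = max (-(lam n * Gs n)) (min (gs (n + 1)) (lam n * Gs n)) :=
    hclip (n + 1) n.succ_pos
  have hSc (n : ℕ) : Sc (n + 1) = lam n * Sc n - gclip (n + 1) := hScrec (n + 1) n.succ_pos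
  have hGnn : ∀ n, 0 ≤ Gs n := by
    rintro (_ | n)
    exacts [hGs0.ge, (abs_nonneg _).trans ((le_max_right _ _).trans (hGs n).ge)]
  have hVnn (n : ℕ) : 0 ≤ Vc n := by
    induction n with
    | zero => exact hVc0.ge
    | succ n ih => rw [hVcrec (n + 1) n.succ_pos]; positivity
  have hr_eq (n : ℕ) (hG : Gs n ≠ 0) :
      r (n + 1) = max (ocpPrediction eps (Vc n) (Gs n) (Sc n)) 0 := by
    rw [hr (n + 1) n.succ_pos, (hrt (n + 1) n.succ_pos).2 hG]; rfl
  have hSnn := clippedSum_nonneg heps hlam hVnn hGnn hclip' hSc0 hSc fun n hg hG => by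
    have := pos_of_subgradient_pos ((le_max_right _ _).trans (hr (n + 1) n.succ_pos).ge)
      (hrstar _) (hmin _) (hsub _ n.succ_pos) (hneg _ n.succ_pos) hg
    exact (lt_max_iff.1 (hr_eq n hG ▸ this)).resolve_right (lt_irrefl 0)
  have hSstar' (n : ℕ) : Sstar (n + 1) = lam n * Sstar n - gs (n + 1) := by
    rw [hSstar, hSstar, ← discountedSum, ← discountedSum, discountedSum_succ]; ring
  have hdist := abs_sub_clippedSum_le (fun n => (hlam n).le) hGnn hGs0 hGs hclip' hSc0 hSc
    (by simp [hSstar]) hSstar'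
  intro t _
  set w := 1 + √(log (1 + 2 * r (t + 1) * eps⁻¹))
  have hSc_le : Sc t ≤ 2 * √(Vc t) * w + 13 * Gs t * w ^ 2 := by
    rcases (hGnn t).eq_or_lt with hG0 | hGpos
    · rw [clippedSum_eq_zero_of_eq_zero hlam hGnn (fun n => (hGs n).ge.trans' (le_max_left _ _))
        hclip' hSc0 hSc t hG0.symm, ← hG0]
      positivity
    · exact le_of_ocpPrediction_le heps (hVnn t) hGpos (hSnn t)
        ((le_max_left _ _).trans (hr_eq t hGpos.ne').ge)
  have hGw : Gs t ≤ Gs t * w ^ 2 :=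
    le_mul_of_one_le_right (hGnn t) (one_le_pow₀ (le_add_of_nonneg_right (sqrt_nonneg _)))
  linarith [abs_sub_abs_le_abs_sub (Sstar t) (Sc t), abs_of_nonneg (hSnn t), hdist t]

/-- For the discounted OCP algorithm `A_CP`, the discounted coverage metric
`S*_t` satisfies
`|S*_t| ≤ 2√(V*_{t,clip})(1+√log(1+2r_{t+1}/ε)) + 14·G*_t·(1+√log(1+2r_{t+1}/ε))²`. -/
theorem ocp_coverage_bound_prediction
    (eps : ℝ) (heps : 0 < eps)
    (lam : ℕ → ℝ) (hlam : ∀ t, 0 < lam t) (hlam0 : lam 0 = 1)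
    (f : ℕ → ℝ → ℝ) (rstar : ℕ → ℝ)
    (Sc Vc Gs rt r gs gclip : ℕ → ℝ)
    (hSc0 : Sc 0 = 0) (hVc0 : Vc 0 = 0) (hGs0 : Gs 0 = 0)
    (hrt : ∀ t, 1 ≤ t →
      (Gs (t-1) = 0 → rt t = 0) ∧
      (Gs (t-1) ≠ 0 → rt t =
        eps * erfi (Sc (t-1) /
          (2 * Real.sqrt (Vc (t-1) + 2 * Gs (t-1) * Sc (t-1) + 16 * (Gs (t-1))^2)))
        - eps * Gs (t-1) / Real.sqrt (Vc (t-1) + 2 * Gs (t-1) * Sc (t-1) + 16 * (Gs (t-1))^2)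
          * Real.exp ((Sc (t-1))^2 /
            (4 * (Vc (t-1) + 2 * Gs (t-1) * Sc (t-1) + 16 * (Gs (t-1))^2)))))
    (hr : ∀ t, 1 ≤ t → r t = max (rt t) 0)
    (hfconv : ∀ t, ConvexOn ℝ (Set.Ici 0) (f t))
    (hrstar : ∀ t, 0 ≤ rstar t)
    (hmin : ∀ t, ∀ y ∈ Set.Ici (0:ℝ), f t (rstar t) ≤ f t y)
    (hsub : ∀ t, 1 ≤ t → ∀ y ∈ Set.Ici (0:ℝ), f t (r t) + gs t * (y - r t) ≤ f t y)
    (hneg : ∀ t, 1 ≤ t → r t = rstar t → gs t ≤ 0)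
    (hclip : ∀ t, 1 ≤ t →
      gclip t = max (-(lam (t-1) * Gs (t-1))) (min (gs t) (lam (t-1) * Gs (t-1))))
    (hScrec : ∀ t, 1 ≤ t → Sc t = lam (t-1) * Sc (t-1) - gclip t)
    (hVcrec : ∀ t, 1 ≤ t → Vc t = (lam (t-1))^2 * Vc (t-1) + (gclip t)^2)
    (hGsrec : ∀ t, 1 ≤ t → Gs t = max (lam (t-1) * Gs (t-1)) |gs t|)
    (Sstar : ℕ → ℝ)
    (hSstar : ∀ t, Sstar t = -∑ i ∈ Finset.Icc 1 t, (∏ j ∈ Finset.Icc i (t-1), lam j) * gs i) :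
    ∀ t, 1 ≤ t →
      |Sstar t| ≤ 2 * Real.sqrt (Vc t)
          * (1 + Real.sqrt (Real.log (1 + 2 * r (t+1) * eps⁻¹)))
        + 14 * Gs t * (1 + Real.sqrt (Real.log (1 + 2 * r (t+1) * eps⁻¹)))^2 :=
  ocp_coverage_bound_prediction_general eps heps lam hlam f rstar Sc Vc Gs rt r gs gclip hSc0 hVc0
    hGs0 hrt hr hrstar hmin hsub hneg hclip hScrec hVcrec hGsrec Sstar hSstar
end
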